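/- Let 1 < α < 2, let N ≥ 1 be an integer, and let τ > 0, h > 0, ν > 0 and κ ≠ 0 be reals. Define the N×N matrices A_α by (A_α)_{ij} = g_{i−j}^{(α)} and D_α as the symmetric tridiagonal matrix with diagonal entries 1 − α/12 and off-diagonal entries α/24. If (τ/h^α) · (τν²/12 + 1/τ)^{−1} ≤ (6 − α)/(2κ² g_0^{(α)}), then the matrix G_α = D_α − (τκ²/(6h^α)) · (τν²/12 + 1/τ)^{−1} · A_α is positive definite: vᵀ G_α v > 0 for every nonzero v ∈ ℝ^N. -/

import Mathlib

/-! The Gamma recurrence gives `(k + 1 + α/2) g_{k+1} = (k - α/2) g_k`, so `g_0 > 0` and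
`g_k < 0` for `k ≥ 1`, and summing it gives `α (g_0 + ⋯ + g_M) = α/2 g_0 - (M + 1 + α/2) g_{M+1}`,
whence `∑_{k=1}^{M} |g_k| < g_0 / 2`. Writing `c` for the coefficient of `A_α`, every row of the
symmetric Toeplitz matrix `G_α` then has off-diagonal absolute sum `< α/12 + c g_0`, and the step
condition `c g_0 ≤ (6 - α)/12` makes this at most the diagonal entry `1 - α/12 - c g_0`. So `G_α` is
strictly diagonally dominant and Gershgorin's theorem puts its eigenvalues in `(0, ∞)`. -/

open Real Matrix

/-- The fractional centred difference coefficients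
`g_k^{(α)} = ((−1)^k Γ(α+1)) / (Γ(α/2 − k + 1) Γ(α/2 + k + 1))`. -/
noncomputable def fracCoeff (α : ℝ) (k : ℤ) : ℝ :=
  ((-1 : ℝ) ^ k * Real.Gamma (α + 1)) /
    (Real.Gamma (α / 2 - (k : ℝ) + 1) * Real.Gamma (α / 2 + (k : ℝ) + 1))

/-- The symmetric Toeplitz matrix `(A_α)_{ij} = g_{i−j}^{(α)}`. -/
noncomputable def fracToeplitz (α : ℝ) (N : ℕ) : Matrix (Fin N) (Fin N) ℝ :=
  fun i j => fracCoeff α ((i : ℤ) - (j : ℤ))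

/-- The symmetric tridiagonal matrix `D_α` with diagonal entries `1 − α/12` and
off-diagonal entries `α/24`. -/
noncomputable def compactTridiag (α : ℝ) (N : ℕ) : Matrix (Fin N) (Fin N) ℝ :=
  fun i j =>
    if i = j then 1 - α / 12
    else if (i : ℤ) - (j : ℤ) = 1 ∨ (j : ℤ) - (i : ℤ) = 1 then α / 24 else 0

open Finset

open scoped ComplexOrder in
theorem Matrix.IsHermitian.posDef_of_sum_row_lt_diag {𝕜 n : Type*} [RCLike 𝕜] [Fintype n]
    [DecidableEq n] {A : Matrix n n 𝕜} (hA : A.IsHermitian)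
    (h : ∀ k, ∑ j ∈ univ.erase k, ‖A k j‖ < RCLike.re (A k k)) : A.PosDef := by
  rw [hA.posDef_iff_eigenvalues_pos]
  intro i
  have hμ : Module.End.HasEigenvalue (toLin' A) (hA.eigenvalues i : 𝕜) := by
    rw [Module.End.hasEigenvalue_iff_mem_spectrum, spectrum_toLin']
    exact (spectrum.algebraMap_mem_iff 𝕜).mpr (hA.eigenvalues_mem_spectrum_real i)
  obtain ⟨k, hk⟩ := eigenvalue_mem_ball hμ
  rw [Metric.mem_closedBall, dist_comm, dist_eq_norm] at hk
  have hre := RCLike.re_le_norm (A k k - hA.eigenvalues i)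
  simp only [map_sub, RCLike.ofReal_re] at hre
  linarith [h k]

theorem Finset.sum_comp_le_sum_of_injOn {ι κ M : Type*} [DecidableEq κ] [AddCommMonoid M]
    [PartialOrder M] [IsOrderedAddMonoid M] {s : Finset ι} {t : Finset κ} {e : ι → κ}
    (he : Set.InjOn e s) (hst : Set.MapsTo e s t) {f : κ → M} (hf : ∀ k ∈ t, 0 ≤ f k) :
    ∑ i ∈ s, f (e i) ≤ ∑ k ∈ t, f k := by
  rw [← sum_image he]
  exact sum_le_sum_of_subset_of_nonneg (image_subset_iff.mpr hst) fun k hk _ => hf k hk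

namespace Matrix

def toeplitz (N : ℕ) (f : ℤ → ℝ) : Matrix (Fin N) (Fin N) ℝ :=
  of fun i j => f (i - j)

variable {N : ℕ} {f : ℤ → ℝ}

theorem toeplitz_apply (i j : Fin N) : toeplitz N f i j = f (i - j) := rfl

theorem isHermitian_toeplitz (hf : ∀ k, f (-k) = f k) : (toeplitz N f).IsHermitian := by
  rw [isHermitian_iff_isSymm]
  ext i j
  simp only [transpose_apply, toeplitz_apply, ← hf ((i : ℤ) - j), neg_sub]

theorem sum_erase_toeplitz_le (hf : ∀ k, 0 ≤ f k) (i : Fin N) :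
    ∑ j ∈ univ.erase i, toeplitz N f i j ≤ ∑ k ∈ Ioo (0 : ℤ) N, (f k + f (-k)) := by
  rw [sum_add_distrib, ← sum_filter_add_sum_filter_not _ (· < i)]
  have hinj : Function.Injective fun j : Fin N => (j : ℤ) :=
    Nat.cast_injective.comp Fin.val_injective
  refine add_le_add ?_ ?_
  · refine sum_comp_le_sum_of_injOn (e := fun j : Fin N => (i : ℤ) - j)
      (fun _ _ _ _ h => hinj (sub_right_injective h)) (fun j hj => ?_) fun k _ => hf k
    simp only [coe_filter, mem_erase, mem_univ, Set.mem_ofPred_eq] at hj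
    simp only [coe_Ioo, Set.mem_Ioo]
    omega
  · calc ∑ j ∈ univ.erase i with ¬j < i, toeplitz N f i j
          = ∑ j ∈ univ.erase i with ¬j < i, f (-((j : ℤ) - i)) :=
          sum_congr rfl fun j _ => by rw [toeplitz_apply, neg_sub]
      _ ≤ _ := sum_comp_le_sum_of_injOn (e := fun j : Fin N => (j : ℤ) - i)
          (fun _ _ _ _ h => hinj (sub_left_injective h)) (fun j hj => ?_) fun k _ => hf (-k)
    simp only [coe_filter, mem_erase, mem_univ, Set.mem_ofPred_eq] at hj
    simp only [coe_Ioo, Set.mem_Ioo]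
    omega

theorem posDef_toeplitz (hf : ∀ k, f (-k) = f k) (hdom : 2 * ∑ k ∈ Ioo (0 : ℤ) N, |f k| < f 0) :
    (toeplitz N f).PosDef := by
  refine (isHermitian_toeplitz hf).posDef_of_sum_row_lt_diag fun i => ?_
  calc ∑ j ∈ univ.erase i, ‖toeplitz N f i j‖
      = ∑ j ∈ univ.erase i, toeplitz N (fun k => |f k|) i j := rfl
    _ ≤ ∑ k ∈ Ioo (0 : ℤ) N, (|f k| + |f (-k)|) := sum_erase_toeplitz_le (fun _ => abs_nonneg _) i
    _ = 2 * ∑ k ∈ Ioo (0 : ℤ) N, |f k| := by simp only [hf, ← two_mul, mul_sum]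
    _ < RCLike.re (toeplitz N f i i) := by simpa [toeplitz_apply] using hdom

end Matrix

section fracCoeff

variable {α : ℝ}

theorem fracCoeff_neg (α : ℝ) (k : ℤ) : fracCoeff α (-k) = fracCoeff α k := by
  rw [fracCoeff, fracCoeff, ← _root_.inv_zpow', inv_neg_one, Int.cast_neg, sub_neg_eq_add,
    ← sub_eq_add_neg, mul_comm (Real.Gamma _)]

theorem half_ne_intCast (hα0 : 0 < α) (hα2 : α < 2) (m : ℤ) : α / 2 ≠ m := by
  intro h
  have hpos : (0 : ℝ) < m := h ▸ by positivity
  have hlt : (m : ℝ) < 1 := h ▸ by linarith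
  have : 0 < m := by exact_mod_cast hpos
  have : m < 1 := by exact_mod_cast hlt
  omega

theorem Gamma_half_sub_ne_zero (hα0 : 0 < α) (hα2 : α < 2) (k : ℤ) :
    Real.Gamma (α / 2 - k) ≠ 0 :=
  Real.Gamma_ne_zero fun m hm => half_ne_intCast hα0 hα2 (k - m) (by push_cast; linarith)

theorem fracCoeff_succ (hα0 : 0 < α) (hα2 : α < 2) (k : ℕ) :
    (k + 1 + α / 2) * fracCoeff α (k + 1) = (k - α / 2) * fracCoeff α k := by
  have hk : α / 2 - k ≠ 0 := sub_ne_zero.mpr (by exact_mod_cast half_ne_intCast hα0 hα2 k)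
  have hΓ : Real.Gamma (α / 2 - k) ≠ 0 := by simpa using Gamma_half_sub_ne_zero hα0 hα2 k
  have hΓ' : Real.Gamma (α / 2 + k + 1) ≠ 0 := (Real.Gamma_pos_of_pos (by positivity)).ne'
  have hs : α / 2 + k + 1 ≠ 0 := by positivity
  simp only [fracCoeff, Int.cast_add, Int.cast_natCast, Int.cast_one,
    zpow_add_one₀ (by norm_num : (-1 : ℝ) ≠ 0)]
  rw [show α / 2 - (k + 1) + 1 = α / 2 - k by ring,
    show α / 2 + (k + 1) + 1 = (α / 2 + k + 1) + 1 by ring,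
    Real.Gamma_add_one (s := α / 2 - k) hk, Real.Gamma_add_one (s := α / 2 + k + 1) hs,
    show (k : ℝ) + 1 + α / 2 = α / 2 + k + 1 by ring, show (k : ℝ) - α / 2 = -(α / 2 - k) by ring]
  generalize α / 2 - k = x at *
  generalize α / 2 + k + 1 = y at *
  field_simp

theorem fracCoeff_zero_pos (hα : -1 < α) : 0 < fracCoeff α 0 := by
  simp only [fracCoeff, Int.cast_zero, zpow_zero, one_mul, sub_zero, add_zero]
  exact div_pos (Real.Gamma_pos_of_pos (by linarith))
    (mul_pos (Real.Gamma_pos_of_pos (by linarith)) (Real.Gamma_pos_of_pos (by linarith)))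

theorem fracCoeff_natCast_succ_neg (hα0 : 0 < α) (hα2 : α < 2) (k : ℕ) :
    fracCoeff α (k + 1) < 0 := by
  have step (k : ℕ) (hk : (k - α / 2) * fracCoeff α k < 0) : fracCoeff α (k + 1) < 0 :=
    neg_of_mul_neg_right (by rwa [fracCoeff_succ hα0 hα2 k]) (by positivity)
  induction k with
  | zero =>
    exact step 0 (by simpa using mul_pos (half_pos hα0) (fracCoeff_zero_pos (by linarith)))
  | succ k ih =>
    refine step (k + 1) (mul_neg_of_pos_of_neg (by push_cast; linarith) ?_)
    exact_mod_cast ih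

theorem fracCoeff_telescope (hα0 : 0 < α) (hα2 : α < 2) (M : ℕ) :
    (M + α / 2) * fracCoeff α M + α * ∑ k ∈ range M, fracCoeff α k = α / 2 * fracCoeff α 0 := by
  induction M with
  | zero => simp
  | succ M ih =>
    rw [sum_range_succ]
    push_cast
    linarith [fracCoeff_succ hα0 hα2 M]

theorem sum_range_abs_fracCoeff_succ_lt (hα0 : 0 < α) (hα2 : α < 2) (M : ℕ) :
    ∑ k ∈ range M, |fracCoeff α (k + 1)| < fracCoeff α 0 / 2 := by
  have htel := fracCoeff_telescope hα0 hα2 (M + 1)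
  rw [sum_range_succ'] at htel
  push_cast at htel
  have hlast := mul_neg_of_pos_of_neg (by positivity : (0 : ℝ) < M + 1 + α / 2)
    (fracCoeff_natCast_succ_neg hα0 hα2 M)
  have habs : ∑ k ∈ range M, |fracCoeff α (k + 1)| = -∑ k ∈ range M, fracCoeff α (k + 1) := by
    rw [← sum_neg_distrib]
    exact sum_congr rfl fun k _ => abs_of_neg (fracCoeff_natCast_succ_neg hα0 hα2 k)
  rw [habs]
  nlinarith

theorem sum_Ioo_abs_fracCoeff_lt (hα0 : 0 < α) (hα2 : α < 2) (M : ℤ) :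
    ∑ k ∈ Ioo 0 M, |fracCoeff α k| < fracCoeff α 0 / 2 := by
  rw [Int.Ioo_eq_finset_map, sum_map]
  simpa [add_comm] using sum_range_abs_fracCoeff_succ_lt hα0 hα2 (M - 0 - 1).toNat

end fracCoeff

noncomputable def compactSymbol (α : ℝ) (k : ℤ) : ℝ :=
  if k = 0 then 1 - α / 12 else if k = 1 ∨ -k = 1 then α / 24 else 0

section compactSymbol

variable {α : ℝ}

theorem compactTridiag_eq_toeplitz (α : ℝ) (N : ℕ) :
    compactTridiag α N = toeplitz N (compactSymbol α) := by
  ext i j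
  simp only [compactTridiag, toeplitz_apply, compactSymbol, neg_sub, sub_eq_zero, Nat.cast_inj,
    Fin.val_inj]

theorem compactSymbol_neg (α : ℝ) (k : ℤ) : compactSymbol α (-k) = compactSymbol α k := by
  simp only [compactSymbol, neg_eq_zero, neg_neg, or_comm]

theorem sum_Ioo_abs_compactSymbol_le (hα : 0 ≤ α) (M : ℤ) :
    ∑ k ∈ Ioo 0 M, |compactSymbol α k| ≤ α / 24 :=
  calc ∑ k ∈ Ioo 0 M, |compactSymbol α k| = ∑ k ∈ Ioo 0 M, if k = 1 then α / 24 else 0 := by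
        refine sum_congr rfl fun k hk => ?_
        rw [mem_Ioo] at hk
        have hk' : -k ≠ 1 := by omega
        simp only [compactSymbol, hk.1.ne', hk', or_false, if_false]
        split_ifs
        · exact abs_of_nonneg (by positivity)
        · exact abs_zero
    _ ≤ α / 24 := by
        rw [sum_ite_eq']
        split_ifs <;> linarith

theorem two_mul_sum_abs_compactSymbol_sub_lt (hα0 : 0 < α) (hα2 : α < 2) {c : ℝ} (hc : 0 < c)
    (hcg : c * fracCoeff α 0 ≤ (6 - α) / 12) (M : ℤ) :
    2 * ∑ k ∈ Ioo 0 M, |compactSymbol α k - c * fracCoeff α k|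
      < compactSymbol α 0 - c * fracCoeff α 0 := by
  have hD := sum_Ioo_abs_compactSymbol_le hα0.le M
  have hA := mul_lt_mul_of_pos_left (sum_Ioo_abs_fracCoeff_lt hα0 hα2 M) hc
  have htri : ∑ k ∈ Ioo 0 M, |compactSymbol α k - c * fracCoeff α k|
      ≤ ∑ k ∈ Ioo 0 M, |compactSymbol α k| + c * ∑ k ∈ Ioo 0 M, |fracCoeff α k| := by
    rw [mul_sum, ← sum_add_distrib]
    gcongr with k
    calc |compactSymbol α k - c * fracCoeff α k|
        ≤ |compactSymbol α k| + |c * fracCoeff α k| := abs_sub _ _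
      _ = |compactSymbol α k| + c * |fracCoeff α k| := by rw [abs_mul, abs_of_pos hc]
  rw [compactSymbol, if_pos rfl]
  linarith

end compactSymbol

theorem scheme_matrix_posDef_general (α : ℝ) (hα1 : 1 < α) (hα2 : α < 2)
    (N : ℕ) (τ hx ν κ : ℝ) (hτ : 0 < τ) (hh : 0 < hx)
    (hκ : κ ≠ 0)
    (hcond : τ / hx ^ α * (τ * ν ^ 2 / 12 + 1 / τ)⁻¹ ≤
      (6 - α) / (2 * κ ^ 2 * fracCoeff α 0)) :
    ∀ v : Fin N → ℝ, v ≠ 0 →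
      0 < v ⬝ᵥ ((compactTridiag α N -
        (τ * κ ^ 2 / (6 * hx ^ α) * (τ * ν ^ 2 / 12 + 1 / τ)⁻¹) •
          fracToeplitz α N).mulVec v) := by
  intro v hv
  set c := τ * κ ^ 2 / (6 * hx ^ α) * (τ * ν ^ 2 / 12 + 1 / τ)⁻¹
  have hα0 : 0 < α := by linarith
  have hg0 := fracCoeff_zero_pos (by linarith : -1 < α)
  have hc0 : 0 < c := by positivity
  have hcg : c * fracCoeff α 0 ≤ (6 - α) / 12 :=
    calc c * fracCoeff α 0
        = κ ^ 2 * fracCoeff α 0 / 6 * (τ / hx ^ α * (τ * ν ^ 2 / 12 + 1 / τ)⁻¹) := by ring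
      _ ≤ κ ^ 2 * fracCoeff α 0 / 6 * ((6 - α) / (2 * κ ^ 2 * fracCoeff α 0)) := by gcongr
      _ = (6 - α) / 12 := by field_simp; ring
  have hG : compactTridiag α N - c • fracToeplitz α N
      = toeplitz N fun k => compactSymbol α k - c * fracCoeff α k := by
    ext i j
    simp [compactTridiag_eq_toeplitz, toeplitz_apply, fracToeplitz]
  have hpos := posDef_toeplitz (fun k => by simp only [compactSymbol_neg, fracCoeff_neg])
    (two_mul_sum_abs_compactSymbol_sub_lt hα0 hα2 hc0 hcg N)
  rw [hG]
  simpa using hpos.dotProduct_mulVec_pos hv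

theorem scheme_matrix_posDef (α : ℝ) (hα1 : 1 < α) (hα2 : α < 2)
    (N : ℕ) (hN : 1 ≤ N) (τ hx ν κ : ℝ) (hτ : 0 < τ) (hh : 0 < hx) (hν : 0 < ν)
    (hκ : κ ≠ 0)
    (hcond : τ / hx ^ α * (τ * ν ^ 2 / 12 + 1 / τ)⁻¹ ≤
      (6 - α) / (2 * κ ^ 2 * fracCoeff α 0)) :
    ∀ v : Fin N → ℝ, v ≠ 0 →
      0 < v ⬝ᵥ ((compactTridiag α N -
        (τ * κ ^ 2 / (6 * hx ^ α) * (τ * ν ^ 2 / 12 + 1 / τ)⁻¹) •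
          fracToeplitz α N).mulVec v) :=
  scheme_matrix_posDef_general α hα1 hα2 N τ hx ν κ hτ hh hκ hcond
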